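/- Let G be a graph containing d pairwise vertex-disjoint connected subgraphs G_1, ..., G_d, each of which has (Δ-1)-treewidth at least d-1. Then the Δ-treewidth of G is at least d-1. -/

import Mathlib

/-- A rooted tree-decomposition of a graph `H`: nodes are `Fin n`, with a root and a
parent function (the root is its own parent, every node reaches the root by iterating
the parent). Bags satisfy edge coverage and, for each vertex, the bags containing it
form a (connected) subtree; vertex coverage is included in the subtree condition. -/
structure TreeDecomp (V : Type) [Fintype V] [DecidableEq V] (H : SimpleGraph V) where
  n : ℕ
  npos : 0 < n
  root : Fin n
  parent : Fin n → Fin n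
  parent_root : parent root = root
  reaches : ∀ t, ∃ k, parent^[k] t = root
  bag : Fin n → Finset V
  edge_cover : ∀ u v : V, H.Adj u v → ∃ t, u ∈ bag t ∧ v ∈ bag t
  subtree : ∀ v : V, ∃ r, v ∈ bag r ∧
      ∀ t, v ∈ bag t → ∃ k, parent^[k] t = r ∧ ∀ j ≤ k, v ∈ bag (parent^[j] t)

namespace TreeDecomp

variable {V : Type} [Fintype V] [DecidableEq V] {H : SimpleGraph V}

/-- The width of a tree-decomposition: maximum bag size minus one. -/
def width (D : TreeDecomp V H) : ℕ :=
  (Finset.univ.sup fun t => (D.bag t).card) - 1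

/-- The tree has height at most `Δ`: every node reaches the root in fewer than `Δ`
parent steps (so every root-to-leaf path has at most `Δ` vertices). -/
def HeightLE (D : TreeDecomp V H) (Δ : ℕ) : Prop :=
  ∀ t, ∃ k < Δ, D.parent^[k] t = D.root

end TreeDecomp

/-- `Δ`-treewidth: minimum width over tree-decompositions of height at most `Δ`
(`⊤` if none exists). -/
noncomputable def twD {V : Type} [Fintype V] [DecidableEq V] (Δ : ℕ) (H : SimpleGraph V) : ℕ∞ :=
  sInf {w : ℕ∞ | ∃ D : TreeDecomp V H, D.HeightLE Δ ∧ (D.width : ℕ∞) = w}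

/-!
Fix a decomposition of `H` of height at most `Δ`. If its root bag meets every `G i`, it has at
least `d` vertices, the `G i` being disjoint. Otherwise it misses some `G i`. As `G i` is
connected, the bags meeting it all lie below a single node `r` other than the root (the highest
top among the subtrees of bags of its vertices), and cutting these bags down to `G i` gives a
decomposition of `G i` of height at most `Δ - 1` and no larger width.
-/

open Function

theorem Equiv.conj_iterate {α β : Type*} (e : α ≃ β) (f : α → α) (n : ℕ) :
    (e.conj f)^[n] = e.conj f^[n] := by
  induction n with
  | zero => ext; simp
  | succ n ih => rw [iterate_succ, iterate_succ, Equiv.conj_comp, ih]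

theorem SimpleGraph.Reachable.imp_of_adj_imp {W : Type*} {G : SimpleGraph W} {p : W → Prop}
    (hp : ∀ a b, G.Adj a b → p a → p b) {u v : W} (huv : G.Reachable u v) (hu : p u) : p v := by
  rw [SimpleGraph.reachable_iff_reflTransGen] at huv
  induction huv with
  | refl => exact hu
  | tail _ hab ih => exact hp _ _ hab ih

theorem Fintype.card_le_card_of_pairwise_disjoint {ι α : Type*} [Fintype ι] {S : ι → Set α}
    (hS : Pairwise (Disjoint on S)) {B : Finset α} (hB : ∀ i, ∃ v ∈ S i, v ∈ B) :
    Fintype.card ι ≤ B.card := by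
  choose f hfS hfB using hB
  have hf : Injective f := fun i j hij ↦ by
    by_contra hne
    exact Set.disjoint_left.1 (hS hne) (hfS i) (hij ▸ hfS j)
  have := Finset.card_le_card_of_injOn (s := Finset.univ) f (fun i _ ↦ hfB i) hf.injOn
  rwa [Finset.card_univ] at this

namespace TreeDecomp

variable {V : Type} [Fintype V] [DecidableEq V] {H : SimpleGraph V}

theorem card_bag_le_width_add_one (D : TreeDecomp V H) (t : Fin D.n) :
    (D.bag t).card ≤ D.width + 1 := by
  have := Finset.le_sup (f := fun t ↦ (D.bag t).card) (Finset.mem_univ t)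
  unfold width
  omega

theorem width_le_of_forall_card_bag_le (D : TreeDecomp V H) {m : ℕ}
    (h : ∀ t, (D.bag t).card ≤ m + 1) : D.width ≤ m := by
  have := Finset.sup_le (s := Finset.univ) fun t _ ↦ h t
  unfold width
  omega

theorem HeightLE.mono {D : TreeDecomp V H} {Δ Δ' : ℕ} (hD : D.HeightLE Δ) (h : Δ ≤ Δ') :
    D.HeightLE Δ' := fun t ↦
  let ⟨k, hk, hkt⟩ := hD t
  ⟨k, hk.trans_le h, hkt⟩

section OfFintype

variable {ι : Type} [Fintype ι] (root : ι) (parent : ι → ι) (bag : ι → Finset V)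
  (parent_root : parent root = root) (reaches : ∀ t, ∃ k, parent^[k] t = root)
  (edge_cover : ∀ u v : V, H.Adj u v → ∃ t, u ∈ bag t ∧ v ∈ bag t)
  (subtree : ∀ v : V, ∃ r, v ∈ bag r ∧
    ∀ t, v ∈ bag t → ∃ k, parent^[k] t = r ∧ ∀ j ≤ k, v ∈ bag (parent^[j] t))

noncomputable def ofFintype : TreeDecomp V H where
  n := Fintype.card ι
  npos := Fintype.card_pos_iff.2 ⟨root⟩
  root := Fintype.equivFin ι root
  parent := (Fintype.equivFin ι).conj parent
  parent_root := by simp [parent_root]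
  reaches t := by
    obtain ⟨k, hk⟩ := reaches ((Fintype.equivFin ι).symm t)
    exact ⟨k, by simp [Equiv.conj_iterate, hk]⟩
  bag := bag ∘ (Fintype.equivFin ι).symm
  edge_cover u v huv := by
    obtain ⟨t, hu, hv⟩ := edge_cover u v huv
    exact ⟨Fintype.equivFin ι t, by simpa using hu, by simpa using hv⟩
  subtree v := by
    obtain ⟨r, hvr, hr⟩ := subtree v
    refine ⟨Fintype.equivFin ι r, by simpa using hvr, fun t hvt ↦ ?_⟩
    obtain ⟨k, hk, hpath⟩ := hr _ hvt
    exact ⟨k, by simp [Equiv.conj_iterate, hk], fun j hj ↦ by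
      simpa [Equiv.conj_iterate] using hpath j hj⟩

theorem width_ofFintype_le {m : ℕ} (h : ∀ t, (bag t).card ≤ m + 1) :
    (ofFintype root parent bag parent_root reaches edge_cover subtree).width ≤ m :=
  width_le_of_forall_card_bag_le _ fun _ ↦ h _

theorem heightLE_ofFintype {Δ : ℕ} (h : ∀ t, ∃ k < Δ, parent^[k] t = root) :
    (ofFintype root parent bag parent_root reaches edge_cover subtree).HeightLE Δ := by
  intro (t : Fin (Fintype.card ι))
  obtain ⟨k, hk, hkt⟩ := h ((Fintype.equivFin ι).symm t)
  refine ⟨k, hk, ?_⟩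
  change ((Fintype.equivFin ι).conj parent)^[k] t = Fintype.equivFin ι root
  rw [Equiv.conj_iterate, Equiv.conj_apply]
  simp [hkt]

end OfFintype

section Depth

variable (D : TreeDecomp V H)

noncomputable def depth (t : Fin D.n) : ℕ := Nat.find (D.reaches t)

def IsAncestor (r t : Fin D.n) : Prop := ∃ k, D.parent^[k] t = r

variable {D}

theorem iterate_depth (t : Fin D.n) : D.parent^[D.depth t] t = D.root :=
  Nat.find_spec (D.reaches t)

theorem depth_le_of_iterate_eq_root {t : Fin D.n} {k : ℕ} (h : D.parent^[k] t = D.root) :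
    D.depth t ≤ k :=
  Nat.find_min' _ h

theorem iterate_parent_root (k : ℕ) : D.parent^[k] D.root = D.root :=
  iterate_fixed D.parent_root k

theorem iterate_eq_root_of_depth_le {t : Fin D.n} {k : ℕ} (h : D.depth t ≤ k) :
    D.parent^[k] t = D.root := by
  rw [← Nat.sub_add_cancel h, iterate_add_apply, iterate_depth, iterate_parent_root]

theorem depth_eq_zero_iff {t : Fin D.n} : D.depth t = 0 ↔ t = D.root :=
  ⟨fun h ↦ by simpa [h] using D.iterate_depth t,
    fun h ↦ Nat.le_zero.1 (depth_le_of_iterate_eq_root (k := 0) h)⟩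

theorem depth_iterate (t : Fin D.n) (k : ℕ) : D.depth (D.parent^[k] t) = D.depth t - k := by
  have hle : D.depth (D.parent^[k] t) ≤ D.depth t - k := by
    rcases le_total k (D.depth t) with hk | hk
    · apply depth_le_of_iterate_eq_root
      rw [← iterate_add_apply, Nat.sub_add_cancel hk, iterate_depth]
    · rw [iterate_eq_root_of_depth_le hk, depth_eq_zero_iff.2 rfl]
      exact Nat.zero_le _
  have hge : D.depth t ≤ D.depth (D.parent^[k] t) + k := by
    apply depth_le_of_iterate_eq_root
    rw [iterate_add_apply, iterate_depth]
  omega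

theorem depth_lt_of_heightLE {Δ : ℕ} (hD : D.HeightLE Δ) (t : Fin D.n) : D.depth t < Δ :=
  let ⟨_, hk, hkt⟩ := hD t
  (depth_le_of_iterate_eq_root hkt).trans_lt hk

namespace IsAncestor

theorem refl (t : Fin D.n) : D.IsAncestor t t := ⟨0, rfl⟩

theorem trans {r s t : Fin D.n} (hrs : D.IsAncestor r s) (hst : D.IsAncestor s t) :
    D.IsAncestor r t := by
  obtain ⟨a, rfl⟩ := hrs
  obtain ⟨b, rfl⟩ := hst
  exact ⟨a + b, iterate_add_apply _ _ _ _⟩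

theorem depth_eq {r t : Fin D.n} {k : ℕ} (h : D.parent^[k] t = r) : D.depth r = D.depth t - k :=
  h ▸ depth_iterate t k

theorem antisymm {r t : Fin D.n} (hrt : D.IsAncestor r t) (htr : D.IsAncestor t r) : r = t := by
  obtain ⟨a, ha⟩ := hrt
  obtain ⟨b, hb⟩ := htr
  have := depth_eq ha
  have := depth_eq hb
  obtain ⟨rfl, rfl⟩ | ⟨hr, ht⟩ : (a = 0 ∧ b = 0) ∨ (D.depth r = 0 ∧ D.depth t = 0) := by omega
  · exact ha.symm
  · rw [depth_eq_zero_iff.1 hr, depth_eq_zero_iff.1 ht]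

theorem of_depth_le {r s t : Fin D.n} (hr : D.IsAncestor r t) (hs : D.IsAncestor s t)
    (h : D.depth r ≤ D.depth s) : D.IsAncestor r s := by
  obtain ⟨a, ha⟩ := hr
  obtain ⟨b, hb⟩ := hs
  rcases le_total b a with hba | hab
  · exact ⟨a - b, by rw [← hb, ← iterate_add_apply, Nat.sub_add_cancel hba, ha]⟩
  · have := depth_eq ha
    have := depth_eq hb
    obtain rfl | ⟨hr, hs⟩ : a = b ∨ (D.depth r = 0 ∧ D.depth s = 0) := by omega
    · exact ⟨0, hb.symm.trans ha⟩
    · rw [depth_eq_zero_iff.1 hr, depth_eq_zero_iff.1 hs]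
      exact refl _

theorem iterate_depth_sub {r t : Fin D.n} (h : D.IsAncestor r t) :
    D.parent^[D.depth t - D.depth r] t = r := by
  obtain ⟨k, hk⟩ := h
  have := depth_eq hk
  rcases Nat.eq_zero_or_pos (D.depth r) with hr | hr
  · rw [hr, Nat.sub_zero, iterate_depth, depth_eq_zero_iff.1 hr]
  · rwa [show D.depth t - D.depth r = k by omega]

end IsAncestor

end Depth

variable (D : TreeDecomp V H)

/-- The top node of the subtree of bags containing `v`. -/
noncomputable def hub (v : V) : Fin D.n := (D.subtree v).choose

theorem mem_bag_hub (v : V) : v ∈ D.bag (D.hub v) := (D.subtree v).choose_spec.1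

theorem exists_iterate_eq_hub {v : V} {t : Fin D.n} (h : v ∈ D.bag t) :
    ∃ k, D.parent^[k] t = D.hub v ∧ ∀ j ≤ k, v ∈ D.bag (D.parent^[j] t) :=
  (D.subtree v).choose_spec.2 t h

theorem isAncestor_hub {v : V} {t : Fin D.n} (h : v ∈ D.bag t) : D.IsAncestor (D.hub v) t :=
  let ⟨k, hk, _⟩ := D.exists_iterate_eq_hub h
  ⟨k, hk⟩

/-- The witness is the hub of least depth among the vertices of `G`: the hubs of adjacent
vertices lie on a common root path, so the minimal one stays above them along every walk. -/
theorem exists_isAncestor_of_connected {G : H.Subgraph} (hG : G.Connected) :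
    ∃ r, (∃ v ∈ G.verts, v ∈ D.bag r) ∧ ∀ v ∈ G.verts, ∀ t, v ∈ D.bag t → D.IsAncestor r t := by
  obtain ⟨m, hm, hmin⟩ :=
    Set.exists_min_image G.verts (fun v ↦ D.depth (D.hub v)) (Set.toFinite _) hG.nonempty
  have step (a b : G.verts) (hab : G.coe.Adj a b) (ha : D.IsAncestor (D.hub m) (D.hub a)) :
      D.IsAncestor (D.hub m) (D.hub b) := by
    obtain ⟨t, hat, hbt⟩ := D.edge_cover a b (G.adj_sub hab)
    exact (ha.trans (D.isAncestor_hub hat)).of_depth_le (D.isAncestor_hub hbt) (hmin b b.2)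
  refine ⟨D.hub m, ⟨m, hm, D.mem_bag_hub m⟩, fun v hv t hvt ↦ ?_⟩
  have hv : D.IsAncestor (D.hub m) (D.hub v) :=
    (hG.coe.preconnected ⟨m, hm⟩ ⟨v, hv⟩).imp_of_adj_imp step (IsAncestor.refl _)
  exact hv.trans (D.isAncestor_hub hvt)

section Restrict

variable (r : Fin D.n)

open Classical in
noncomputable def subtreeParent (t : Fin D.n) : Fin D.n :=
  if D.IsAncestor r (D.parent t) then D.parent t else r

theorem isAncestor_subtreeParent (t : Fin D.n) : D.IsAncestor r (D.subtreeParent r t) := by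
  unfold subtreeParent
  split_ifs with h
  exacts [h, IsAncestor.refl r]

theorem subtreeParent_self : D.subtreeParent r r = r := by
  unfold subtreeParent
  split_ifs with h
  exacts [h.antisymm ⟨1, rfl⟩ ▸ rfl, rfl]

theorem iterate_subtreeParent {t : Fin D.n} {k : ℕ}
    (h : ∀ j < k, D.IsAncestor r (D.parent^[j + 1] t)) :
    (D.subtreeParent r)^[k] t = D.parent^[k] t := by
  induction k generalizing t with
  | zero => rfl
  | succ k ih =>
    have hpt : D.subtreeParent r t = D.parent t := if_pos (h 0 k.succ_pos)
    rw [iterate_succ_apply, iterate_succ_apply, hpt]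
    exact ih fun j hj ↦ by simpa only [← iterate_succ_apply] using h (j + 1) (by omega)

theorem IsAncestor.iterate_subtreeParent {t : Fin D.n} (h : D.IsAncestor r t) :
    (D.subtreeParent r)^[D.depth t - D.depth r] t = r := by
  rw [D.iterate_subtreeParent r fun j hj ↦ ?_, h.iterate_depth_sub]
  refine ⟨D.depth t - D.depth r - (j + 1), ?_⟩
  rw [← iterate_add_apply, Nat.sub_add_cancel hj, h.iterate_depth_sub]

/-- `D'` keeps the nodes below `r`, with bags cut down to the vertices of `G`. -/
theorem exists_heightLE_sub_depth_width_le (G : H.Subgraph) [Fintype G.verts]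
    [DecidableEq G.verts] (hG : ∀ v ∈ G.verts, ∀ t, v ∈ D.bag t → D.IsAncestor r t) {Δ : ℕ}
    (hD : D.HeightLE Δ) :
    ∃ D' : TreeDecomp G.verts G.coe, D'.HeightLE (Δ - D.depth r) ∧ D'.width ≤ D.width := by
  classical
  let S : Set (Fin D.n) := {t | D.IsAncestor r t}
  have hS : Set.MapsTo (D.subtreeParent r) S S := fun t _ ↦ D.isAncestor_subtreeParent r t
  let parent : S → S := hS.restrict _ _ _
  have coe_iterate_parent (k : ℕ) (t : S) :
      (parent^[k] t : Fin D.n) = (D.subtreeParent r)^[k] t :=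
    hS.coe_iterate_restrict t k
  let root : S := ⟨r, IsAncestor.refl r⟩
  let bag (t : S) : Finset G.verts := {v | ↑v ∈ D.bag t}
  have parent_root : parent root = root := Subtype.ext (D.subtreeParent_self r)
  have reaches (t : S) : ∃ k < Δ - D.depth r, parent^[k] t = root := by
    refine ⟨D.depth t - D.depth r, ?_, Subtype.ext ?_⟩
    · have := D.depth_lt_of_heightLE hD t
      have := D.depth_lt_of_heightLE hD r
      omega
    · rw [coe_iterate_parent]
      exact t.2.iterate_subtreeParent
  have edge_cover (u v : G.verts) (huv : G.coe.Adj u v) : ∃ t, u ∈ bag t ∧ v ∈ bag t := by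
    obtain ⟨t, hu, hv⟩ := D.edge_cover u v (G.adj_sub huv)
    exact ⟨⟨t, hG u u.2 t hu⟩, by simpa [bag] using hu, by simpa [bag] using hv⟩
  have subtree (v : G.verts) : ∃ s, v ∈ bag s ∧ ∀ t, v ∈ bag t →
      ∃ k, parent^[k] t = s ∧ ∀ j ≤ k, v ∈ bag (parent^[j] t) := by
    refine ⟨⟨D.hub v, hG v v.2 _ (D.mem_bag_hub v)⟩, by simpa [bag] using D.mem_bag_hub v,
      fun t hvt ↦ ?_⟩
    obtain ⟨k, hk, hpath⟩ := D.exists_iterate_eq_hub (by simpa [bag] using hvt)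
    have heq (j : ℕ) (hj : j ≤ k) : (parent^[j] t : Fin D.n) = D.parent^[j] t := by
      rw [coe_iterate_parent]
      exact D.iterate_subtreeParent r fun i hi ↦ hG v v.2 _ (hpath _ (by omega))
    refine ⟨k, Subtype.ext ?_, fun j hj ↦ ?_⟩
    · rw [heq k le_rfl, hk]
    · simpa [bag, heq j hj] using hpath j hj
  refine ⟨ofFintype root parent bag parent_root (fun t ↦ (reaches t).imp fun _ ↦ And.right)
    edge_cover subtree, heightLE_ofFintype _ _ _ _ _ _ _ reaches,
    width_ofFintype_le _ _ _ _ _ _ _ fun t ↦ ?_⟩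
  calc _ ≤ (D.bag _).card := Finset.card_le_card_of_injOn Subtype.val
          (fun v hv ↦ by simpa [bag] using hv) Subtype.val_injective.injOn
    _ ≤ D.width + 1 := D.card_bag_le_width_add_one _

end Restrict

end TreeDecomp

theorem twD_le {V : Type} [Fintype V] [DecidableEq V] {H : SimpleGraph V} {Δ : ℕ}
    {D : TreeDecomp V H} (hD : D.HeightLE Δ) : twD Δ H ≤ D.width :=
  sInf_le ⟨D, hD, rfl⟩

theorem le_twD_iff {V : Type} [Fintype V] [DecidableEq V] {H : SimpleGraph V} {Δ : ℕ} {m : ℕ∞} :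
    m ≤ twD Δ H ↔ ∀ D : TreeDecomp V H, D.HeightLE Δ → m ≤ D.width := by
  refine le_sInf_iff.trans ⟨fun h D hD ↦ h _ ⟨D, hD, rfl⟩, ?_⟩
  rintro h _ ⟨D, hD, rfl⟩
  exact h D hD

open scoped Classical in
theorem twD_lower_bound_of_disjoint_subgraphs_general (V : Type) [Fintype V] [DecidableEq V]
    (H : SimpleGraph V) (d Δ : ℕ)
    (G : Fin d → H.Subgraph)
    (hdisj : ∀ i j, i ≠ j → Disjoint (G i).verts (G j).verts)
    (hconn : ∀ i, (G i).Connected)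
    (htw : ∀ i, ((d - 1 : ℕ) : ℕ∞) ≤ twD (Δ - 1) (G i).coe) :
    ((d - 1 : ℕ) : ℕ∞) ≤ twD Δ H := by
  refine le_twD_iff.2 fun D hD ↦ ?_
  by_cases hroot : ∃ i, ∀ v ∈ (G i).verts, v ∉ D.bag D.root
  · obtain ⟨i, hi⟩ := hroot
    obtain ⟨r, ⟨v, hv, hvr⟩, hr⟩ := D.exists_isAncestor_of_connected (hconn i)
    have hr_root : r ≠ D.root := by
      rintro rfl
      exact hi v hv hvr
    obtain ⟨D', hD', hw⟩ := D.exists_heightLE_sub_depth_width_le r (G i) hr hD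
    have hdepth : Δ - D.depth r ≤ Δ - 1 := by
      have := mt D.depth_eq_zero_iff.1 hr_root
      omega
    calc ((d - 1 : ℕ) : ℕ∞) ≤ twD (Δ - 1) (G i).coe := htw i
      _ ≤ D'.width := twD_le (hD'.mono hdepth)
      _ ≤ D.width := by exact_mod_cast hw
  · push Not at hroot
    have hcard := Fintype.card_le_card_of_pairwise_disjoint hdisj hroot
    have hwidth := D.card_bag_le_width_add_one D.root
    rw [Fintype.card_fin] at hcard
    exact_mod_cast (by omega : d - 1 ≤ D.width)

open scoped Classical in
/-- if G contains d pairwise vertex-disjoint connected subgraphs, each of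
(Δ-1)-treewidth at least d-1, then the Δ-treewidth of G is at least d-1. -/
theorem twD_lower_bound_of_disjoint_subgraphs (V : Type) [Fintype V] [DecidableEq V]
    (H : SimpleGraph V) (d Δ : ℕ) (hd : 0 < d) (hΔ : 0 < Δ)
    (G : Fin d → H.Subgraph)
    (hdisj : ∀ i j, i ≠ j → Disjoint (G i).verts (G j).verts)
    (hconn : ∀ i, (G i).Connected)
    (htw : ∀ i, ((d - 1 : ℕ) : ℕ∞) ≤ twD (Δ - 1) (G i).coe) :
    ((d - 1 : ℕ) : ℕ∞) ≤ twD Δ H :=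
  twD_lower_bound_of_disjoint_subgraphs_general V H d Δ G hdisj hconn htw
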